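/- arXiv:2406.02981 — 2 statements merged into one kernel-verified Lean document; each statement's English description precedes it below -/
import Mathlib

section
/- Let f : {0,1}^n → {0,1} be a Boolean function. A feature i ∈ {1,…,n} is globally necessary for f if and only if for every x ∈ {0,1}^n, f(x⁽ⁱ⁾) ≠ f(x), where x⁽ⁱ⁾ denotes x with its i-th coordinate negated and all other coordinates unchanged. -/
/-!
Sufficiency is monotone in the set of fixed features, so `i` is locally necessary at `x` exactly
when fixing every feature except `i` is not sufficient. Since the only freedom left is the value
of the `i`-th bit, that happens exactly when flipping this bit changes `f x`.
-/

/-- `comb S x z` is the input that equals `x` on coordinates in `S` and `z` outside `S`. -/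
def comb {n : ℕ} (S : Finset (Fin n)) (x z : Fin n → Bool) : Fin n → Bool :=
  fun i => if i ∈ S then x i else z i

/-- `S` is a local sufficient reason for `(f, x)`. -/
def LocalSuff {n : ℕ} (f : (Fin n → Bool) → Bool) (x : Fin n → Bool)
    (S : Finset (Fin n)) : Prop :=
  ∀ z : Fin n → Bool, f (comb S x z) = f x

/-- Feature `i` is locally necessary for `(f, x)`. -/
def LocallyNecessary {n : ℕ} (f : (Fin n → Bool) → Bool) (x : Fin n → Bool)
    (i : Fin n) : Prop :=
  ∀ S : Finset (Fin n), LocalSuff f x S → ¬ LocalSuff f x (S.erase i)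

/-- Feature `i` is globally necessary for `f`: locally necessary for every input. -/
def GloballyNecessary {n : ℕ} (f : (Fin n → Bool) → Bool) (i : Fin n) : Prop :=
  ∀ x : Fin n → Bool, LocallyNecessary f x i

section

variable {n : ℕ} {f : (Fin n → Bool) → Bool} {x : Fin n → Bool} {S T : Finset (Fin n)}

theorem comb_eq_right_of_eqOn {z : Fin n → Bool} (h : ∀ j ∈ S, x j = z j) : comb S x z = z := by
  funext j
  by_cases hj : j ∈ S <;> simp [comb, hj, h]

theorem comb_univ (z : Fin n → Bool) : comb Finset.univ x z = x := by
  funext j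
  simp [comb]

theorem comb_erase_univ (i : Fin n) (z : Fin n → Bool) :
    comb (Finset.univ.erase i) x z = Function.update x i (z i) := by
  funext j
  by_cases hj : j = i
  · subst hj
    simp [comb]
  · simp [comb, hj]

theorem localSuff_univ : LocalSuff f x Finset.univ := by
  intro z
  rw [comb_univ]

theorem LocalSuff.mono (hS : LocalSuff f x S) (hST : S ⊆ T) : LocalSuff f x T := by
  intro z
  have hcomb : comb S x (comb T x z) = comb T x z :=
    comb_eq_right_of_eqOn fun j hj => by simp [comb, hST hj]
  rw [← hcomb, hS]

theorem locallyNecessary_iff_not_localSuff_erase_univ (i : Fin n) :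
    LocallyNecessary f x i ↔ ¬ LocalSuff f x (Finset.univ.erase i) := by
  refine ⟨fun h => h _ localSuff_univ, fun h S _ hS => h ?_⟩
  exact hS.mono (Finset.erase_subset_erase i (Finset.subset_univ S))

theorem localSuff_erase_univ_iff (i : Fin n) :
    LocalSuff f x (Finset.univ.erase i) ↔ f (Function.update x i (!x i)) = f x := by
  simp only [LocalSuff, comb_erase_univ]
  refine ⟨fun h => by simpa using h (Function.update x i (!x i)), fun h z => ?_⟩
  rcases Bool.eq_or_eq_not (z i) (x i) with hz | hz
  · rw [hz, Function.update_eq_self]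
  · rw [hz, h]

end

theorem globally_necessary_iff_flip_always_changes {n : ℕ}
    (f : (Fin n → Bool) → Bool) (i : Fin n) :
    GloballyNecessary f i ↔
      ∀ x : Fin n → Bool, f (Function.update x i (! x i)) ≠ f x := by
  refine forall_congr' fun x => ?_
  rw [locallyNecessary_iff_not_localSuff_erase_univ, localSuff_erase_univ_iff]
end

section
/- Let f : {0,1}^n → {0,1} be a Boolean function and let 𝒞 be the family of all subsets C ⊆ {1,…,n} such that C is a local contrastive reason for (f,x) for some x ∈ {0,1}^n. Then a subset S ⊆ {1,…,n} is a hitting set for 𝒞 of minimum cardinality among all hitting sets for 𝒞 if and only if S is a global sufficient reason for f of minimum cardinality among all global sufficient reasons for f. -/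
/-- `S` is a global sufficient reason for `f`. -/
def GlobalSuff {n : ℕ} (f : (Fin n → Bool) → Bool) (S : Finset (Fin n)) : Prop :=
  ∀ x z : Fin n → Bool, f (comb S x z) = f x

/-- `S` is a local contrastive reason for `(f, x)`: some change of the features
in `S` (keeping `x` outside `S`) changes the prediction. -/
def LocalContrastive {n : ℕ} (f : (Fin n → Bool) → Bool) (x : Fin n → Bool)
    (S : Finset (Fin n)) : Prop :=
  ∃ z : Fin n → Bool, f (comb S z x) ≠ f x

section

variable {n : ℕ}

def HitsContrastives (f : (Fin n → Bool) → Bool) (H : Finset (Fin n)) : Prop :=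
  ∀ C : Finset (Fin n), (∃ x : Fin n → Bool, LocalContrastive f x C) → (H ∩ C).Nonempty

lemma comb_compl (S : Finset (Fin n)) (x z : Fin n → Bool) :
    comb Sᶜ z x = comb S x z := by
  funext i
  by_cases hi : i ∈ S <;> simp [comb, hi]

lemma comb_comb_of_disjoint {S C : Finset (Fin n)} (h : Disjoint S C)
    (x z : Fin n → Bool) : comb S (comb C z x) x = x := by
  funext i
  by_cases hi : i ∈ S
  · simp [comb, hi, Finset.disjoint_left.mp h hi]
  · simp [comb, hi]

lemma globalSuff_of_hitsContrastives {f : (Fin n → Bool) → Bool} {S : Finset (Fin n)}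
    (h : HitsContrastives f S) : GlobalSuff f S := by
  intro x z
  by_contra hne
  have hC : LocalContrastive f x Sᶜ := ⟨z, by rwa [comb_compl]⟩
  obtain ⟨i, hi⟩ := h Sᶜ ⟨x, hC⟩
  simp at hi

lemma GlobalSuff.hitsContrastives {f : (Fin n → Bool) → Bool} {S : Finset (Fin n)}
    (h : GlobalSuff f S) : HitsContrastives f S := by
  rintro C ⟨x, z, hz⟩
  by_contra hSC
  have hdisj : Disjoint S C := by
    rwa [Finset.disjoint_iff_inter_eq_empty, ← Finset.not_nonempty_iff_eq_empty]
  have hsuff := h (comb C z x) x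
  rw [comb_comb_of_disjoint hdisj] at hsuff
  exact hz hsuff.symm

lemma hitsContrastives_iff_globalSuff (f : (Fin n → Bool) → Bool) (S : Finset (Fin n)) :
    HitsContrastives f S ↔ GlobalSuff f S :=
  ⟨globalSuff_of_hitsContrastives, GlobalSuff.hitsContrastives⟩

end

theorem mhs_of_contrastives_iff_min_global_suff {n : ℕ}
    (f : (Fin n → Bool) → Bool) (S : Finset (Fin n)) :
    ((∀ C : Finset (Fin n), (∃ x : Fin n → Bool, LocalContrastive f x C) →
        (S ∩ C).Nonempty) ∧
      ∀ H : Finset (Fin n),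
        (∀ C : Finset (Fin n), (∃ x : Fin n → Bool, LocalContrastive f x C) →
          (H ∩ C).Nonempty) → S.card ≤ H.card) ↔
    (GlobalSuff f S ∧ ∀ T : Finset (Fin n), GlobalSuff f T → S.card ≤ T.card) :=
  (hitsContrastives_iff_globalSuff f S).and <|
    forall_congr' fun H => imp_congr_left (hitsContrastives_iff_globalSuff f H)
end
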